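/- Let $X$ be the completion of $C[0,2]$ in the norm $|\|f\|| = \sup_n \frac{1}{n!}\max_{t \in \varphi^{-n}(0)}|f(t)|$, and let $A$ be the continuous extension of the composition operator $T_\varphi f = f \circ \varphi$. Then $\|A\| \le 1$ and for every $x$ in the closed ideal $J = \{x \in X : x(0) = 0\}$ and every $k \in \mathbb{N}$, $|\|A^k x\|| \leq \frac{1}{k!}|\|x\||$; in particular the restriction of $A$ to $J$ is quasinilpotent. -/

import Mathlib

/-!
Every point of `φ⁻⁽ⁿ⁺¹⁾(0)` is sent by `φᵏ` into `φ⁻⁽ⁿ⁻ᵏ⁺¹⁾(0)`, and to `0` itself once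
`k > n`. Hence `f ∘ φ` costs at most one factorial in the weights, so `|‖f ∘ φ‖| ≤ |‖f‖|`,
and for `g(0) = 0` the weight `1/(n+1)!` of level `n` is at most `1/k!` times the weight
`1/(n-k+1)!` of level `n - k`, so `|‖g ∘ φᵏ‖| ≤ |‖g‖|/k!`. The estimates pass to the
completion by density; on `J` one applies them to `x - x(0)·1`.
-/

/-- The tent map on `[0,1]`. -/
noncomputable def psi0 (t : ℝ) : ℝ := if t ≤ 1 / 2 then 2 * t else 2 - 2 * t

/-- The iterated tent map `ψ : [0,1] → [0,1]`: `ψ 0 = 0` and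
`ψ t = 2⁻ⁿ ψ₀(2ⁿ t - 1)` for `t ∈ [2⁻ⁿ, 2⁻ⁿ⁺¹]` (here `n = -⌊log₂ t⌋`). -/
noncomputable def psi (t : ℝ) : ℝ :=
  if t ≤ 0 then 0
  else (2 : ℝ) ^ (⌊Real.logb 2 t⌋) * psi0 ((2 : ℝ) ^ (-⌊Real.logb 2 t⌋) * t - 1)

/-- The map `φ : [0,2] → [0,2]`, `φ t = ψ t` on `[0,1]` and `φ t = ψ (2 - t)` on
`[1,2]`. -/
noncomputable def phi (t : ℝ) : ℝ := if t ≤ 1 then psi t else psi (2 - t)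

/-- The level set `φ⁻⁽ⁿ⁺¹⁾(0)` inside `[0,2]` (indexing so that `Z 0 = φ⁻¹(0)`). -/
def Zlevel (n : ℕ) : Set (Set.Icc (0 : ℝ) 2) :=
  {t : Set.Icc (0 : ℝ) 2 | phi^[n + 1] (t : ℝ) = 0}

/-- The norm `|‖f‖| = sup_{n ≥ 1} (1/n!) max_{t ∈ φ⁻ⁿ(0)} |f t|` on `C[0,2]`. -/
noncomputable def tnorm (f : C(Set.Icc (0 : ℝ) 2, ℝ)) : ℝ :=
  ⨆ n : ℕ, (((n + 1).factorial : ℝ))⁻¹ *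
    sSup ((fun t : Set.Icc (0 : ℝ) 2 => |f t|) '' Zlevel n)

open Nat

local notation "𝕀" => Set.Icc (0 : ℝ) 2

lemma Nat.factorial_mul_factorial_sub_succ_le {k n : ℕ} (hk : k ≤ n) :
    k ! * (n - k + 1)! ≤ (n + 1)! := by
  have h := Nat.factorial_mul_factorial_dvd_factorial_add k (n - k + 1)
  rw [show k + (n - k + 1) = n + 1 by omega] at h
  exact Nat.le_of_dvd (Nat.factorial_pos _) h

lemma ContinuousMap.iterate_comp_apply {X Y : Type*} [TopologicalSpace X] [TopologicalSpace Y]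
    (ψ : C(X, X)) (f : C(X, Y)) (k : ℕ) (x : X) :
    ((fun g : C(X, Y) => g.comp ψ)^[k] f) x = f (ψ^[k] x) := by
  induction k generalizing f with
  | zero => rfl
  | succ k ih =>
    rw [Function.iterate_succ_apply, ih, Function.iterate_succ_apply']
    rfl

def zeroIcc : 𝕀 := ⟨0, by norm_num⟩

lemma phi_zero : phi 0 = 0 := by simp [phi, psi]

lemma tnorm_nonneg (f : C(𝕀, ℝ)) : 0 ≤ tnorm f :=
  Real.iSup_nonneg fun _ =>
    mul_nonneg (by positivity) (Real.sSup_nonneg (by rintro _ ⟨t, -, rfl⟩; positivity))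

lemma abs_le_factorial_mul_tnorm (f : C(𝕀, ℝ)) {n : ℕ} {t : 𝕀} (ht : t ∈ Zlevel n) :
    |f t| ≤ (n + 1)! * tnorm f := by
  have hbdd : BddAbove ((fun t : 𝕀 => |f t|) '' Zlevel n) :=
    ⟨‖f‖, by rintro _ ⟨s, -, rfl⟩; exact f.norm_coe_le_norm s⟩
  have hterms : BddAbove (Set.range fun n : ℕ =>
      ((n + 1)! : ℝ)⁻¹ * sSup ((fun t : 𝕀 => |f t|) '' Zlevel n)) := by
    refine ⟨‖f‖, ?_⟩
    rintro _ ⟨n, rfl⟩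
    have hsup : sSup ((fun t : 𝕀 => |f t|) '' Zlevel n) ≤ ‖f‖ :=
      Real.sSup_le (by rintro _ ⟨s, -, rfl⟩; exact f.norm_coe_le_norm s) (norm_nonneg f)
    calc ((n + 1)! : ℝ)⁻¹ * sSup ((fun t : 𝕀 => |f t|) '' Zlevel n)
        ≤ 1 * ‖f‖ := by
          gcongr
          · exact Real.sSup_nonneg (by rintro _ ⟨s, -, rfl⟩; positivity)
          · exact inv_le_one_of_one_le₀ (mod_cast Nat.one_le_iff_ne_zero.mpr (factorial_ne_zero _))
      _ = ‖f‖ := one_mul _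
  rw [← inv_mul_le_iff₀ (by positivity)]
  calc ((n + 1)! : ℝ)⁻¹ * |f t|
      ≤ ((n + 1)! : ℝ)⁻¹ * sSup ((fun t : 𝕀 => |f t|) '' Zlevel n) := by
        gcongr; exact le_csSup hbdd ⟨t, ht, rfl⟩
    _ ≤ tnorm f := le_ciSup hterms n

lemma tnorm_le_of_abs_le {f : C(𝕀, ℝ)} {C : ℝ} (hC : 0 ≤ C)
    (h : ∀ n, ∀ t ∈ Zlevel n, |f t| ≤ (n + 1)! * C) : tnorm f ≤ C :=
  ciSup_le fun n => by
    rw [inv_mul_le_iff₀ (by positivity)]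
    exact Real.sSup_le (by rintro _ ⟨t, ht, rfl⟩; exact h n t ht) (by positivity)

section phic

variable {phic : C(𝕀, 𝕀)} (hphic : ∀ t : 𝕀, (phic t : ℝ) = phi t)
include hphic

lemma coe_iterate_phic (k : ℕ) (t : 𝕀) : ((phic^[k] t : 𝕀) : ℝ) = phi^[k] t :=
  Function.Semiconj.iterate_right (f := Subtype.val) hphic k t

lemma iterate_phic_mem_Zlevel {n : ℕ} (k : ℕ) {t : 𝕀} (ht : t ∈ Zlevel n) :
    phic^[k] t ∈ Zlevel (n - k) := by
  have ht' : phi^[n + 1] (t : ℝ) = 0 := ht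
  show phi^[n - k + 1] ((phic^[k] t : 𝕀) : ℝ) = 0
  rw [coe_iterate_phic hphic, ← Function.iterate_add_apply,
    show n - k + 1 + k = (k - n) + (n + 1) by omega, Function.iterate_add_apply, ht']
  exact Function.iterate_fixed phi_zero _

lemma iterate_phic_eq_zeroIcc {n k : ℕ} (hnk : n < k) {t : 𝕀} (ht : t ∈ Zlevel n) :
    phic^[k] t = zeroIcc := by
  have ht' : phi^[n + 1] (t : ℝ) = 0 := ht
  apply Subtype.ext
  rw [coe_iterate_phic hphic, show k = (k - (n + 1)) + (n + 1) by omega,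
    Function.iterate_add_apply, ht']
  exact Function.iterate_fixed phi_zero _

lemma tnorm_comp_phic_le (f : C(𝕀, ℝ)) : tnorm (f.comp phic) ≤ tnorm f :=
  tnorm_le_of_abs_le (tnorm_nonneg f) fun n t ht =>
    calc |f (phic t)| ≤ (n - 1 + 1)! * tnorm f :=
          abs_le_factorial_mul_tnorm f (iterate_phic_mem_Zlevel hphic 1 ht)
      _ ≤ (n + 1)! * tnorm f := by
          gcongr
          · exact tnorm_nonneg f
          · omega

lemma tnorm_iterate_comp_phic_le {g : C(𝕀, ℝ)} (hg : g zeroIcc = 0) (k : ℕ) :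
    tnorm ((fun f : C(𝕀, ℝ) => f.comp phic)^[k] g) ≤ (k ! : ℝ)⁻¹ * tnorm g := by
  have hbound : 0 ≤ (k ! : ℝ)⁻¹ * tnorm g := mul_nonneg (by positivity) (tnorm_nonneg g)
  refine tnorm_le_of_abs_le hbound fun n t ht => ?_
  rw [ContinuousMap.iterate_comp_apply]
  rcases lt_or_ge n k with hnk | hkn
  · rw [iterate_phic_eq_zeroIcc hphic hnk ht, hg, abs_zero]
    positivity
  · have hfac : ((n - k + 1)! : ℝ) ≤ (n + 1)! * (k ! : ℝ)⁻¹ := by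
      rw [le_mul_inv_iff₀ (by positivity), mul_comm]
      exact_mod_cast Nat.factorial_mul_factorial_sub_succ_le hkn
    calc |g (phic^[k] t)| ≤ (n - k + 1)! * tnorm g :=
          abs_le_factorial_mul_tnorm g (iterate_phic_mem_Zlevel hphic k ht)
      _ ≤ (n + 1)! * (k ! : ℝ)⁻¹ * tnorm g := by gcongr; exact tnorm_nonneg g
      _ = (n + 1)! * ((k ! : ℝ)⁻¹ * tnorm g) := mul_assoc _ _ _

end phic

/-- Let `X` be the completion of `C[0,2]` in the norm `|‖·‖|` (presented
abstractly: a Banach lattice with a dense lattice-isometric embedding `j`), let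
`A` extend the composition operator `f ↦ f ∘ φ` and `δ` extend evaluation at
`0`.  Then `‖A‖ ≤ 1` and `|‖Aᵏ x‖| ≤ |‖x‖| / k!` for all `x` in the closed
ideal `J = {x : x(0) = 0}`; in particular `A` restricted to `J` is
quasinilpotent. -/
theorem stmt13 {X : Type*} [NormedAddCommGroup X] [NormedSpace ℝ X]
    (j : C(Set.Icc (0 : ℝ) 2, ℝ) →ₗ[ℝ] X)
    (hjiso : ∀ f, ‖j f‖ = tnorm f)
    (hjdense : DenseRange j)
    (phic : C(Set.Icc (0 : ℝ) 2, Set.Icc (0 : ℝ) 2))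
    (hphic : ∀ t : Set.Icc (0 : ℝ) 2, (phic t : ℝ) = phi t)
    (A : X →L[ℝ] X) (hA : ∀ f, A (j f) = j (f.comp phic))
    (δ : X →L[ℝ] ℝ)
    (hδ : ∀ f : C(Set.Icc (0 : ℝ) 2, ℝ), δ (j f) = f ⟨0, by norm_num⟩) :
    ‖A‖ ≤ 1 ∧
      ∀ x : X, δ x = 0 → ∀ k : ℕ,
        ‖(A ^ k) x‖ ≤ ((k.factorial : ℝ))⁻¹ * ‖x‖ := by
  have hAk : ∀ k f, (A ^ k) (j f) = j ((fun f : C(𝕀, ℝ) => f.comp phic)^[k] f) := by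
    intro k f
    rw [← ContinuousLinearMap.coe_coe, ContinuousLinearMap.toLinearMap_pow,
      Module.End.pow_apply]
    exact ((Function.Semiconj.iterate_right (fun f => (hA f).symm) k) f).symm
  refine ⟨A.opNorm_le_bound zero_le_one fun x => ?_, fun x hx k => ?_⟩
  · rw [one_mul]
    refine hjdense.induction_on x (isClosed_le (by fun_prop) (by fun_prop)) fun f => ?_
    rw [hA, hjiso, hjiso]
    exact tnorm_comp_phic_le hphic f
  · let P : X →L[ℝ] X := .id ℝ X - δ.smulRight (j 1)
    have hP : ∀ y, ‖(A ^ k) (P y)‖ ≤ (k ! : ℝ)⁻¹ * ‖P y‖ := fun y =>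
      hjdense.induction_on y (isClosed_le (by fun_prop) (by fun_prop)) fun f => by
        have hPj : P (j f) = j (f - f zeroIcc • 1) := by
          simp [P, hδ, zeroIcc]
        rw [hPj, hAk, hjiso, hjiso]
        exact tnorm_iterate_comp_phic_le hphic (by simp) k
    simpa [P, hx] using hP x
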